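/- Let f be a Laurent polynomial in two variables over an algebraically closed field of characteristic 0 whose support A has convex hull a quadrilateral with affine ℤ-span equal to ℤ², and let f = gh be a nontrivial factorization. Then the curves V(g) and V(h) have intersection number at most 1 in (k*)²; in particular they meet in at most one point, transversally. -/

import Mathlib

/-- Evaluation of a Laurent polynomial at a point of the torus `(k*)^n`. -/
noncomputable def evalT {k : Type*} [Field k] {n : ℕ} (f : AddMonoidAlgebra k (Fin n → ℤ))
    (p : Fin n → kˣ) : k :=
  f.coeff.sum fun u a => a * ∏ i, (p i : k) ^ (u i)

/-- Evaluation of the partial derivative `∂f/∂x_i` at a point of the torus. -/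
noncomputable def partialEval {k : Type*} [Field k] {n : ℕ} (i : Fin n)
    (f : AddMonoidAlgebra k (Fin n → ℤ)) (p : Fin n → kˣ) : k :=
  f.coeff.sum fun u a => (u i : k) * a * ∏ j, (p j : k) ^ (u j - if j = i then 1 else 0)

/-- The real point corresponding to a lattice point. -/
noncomputable def toR {n : ℕ} (u : Fin n → ℤ) : Fin n → ℝ := fun i => (u i : ℝ)

section Machinery

variable {k : Type*} [Field k]

/-- k-valued monomial at a point of the torus. -/
noncomputable def Pk (p : Fin 2 → kˣ) (u : Fin 2 → ℤ) : k := ∏ i, (p i : k) ^ (u i)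

lemma Pk_ne_zero (p : Fin 2 → kˣ) (u : Fin 2 → ℤ) : Pk p u ≠ 0 := by
  apply Finset.prod_ne_zero_iff.2
  intro i _
  exact zpow_ne_zero _ (Units.ne_zero _)

lemma Pk_add (p : Fin 2 → kˣ) (u v : Fin 2 → ℤ) : Pk p (u + v) = Pk p u * Pk p v := by
  rw [Pk, Pk, Pk, ← Finset.prod_mul_distrib]
  refine Finset.prod_congr rfl fun i _ => ?_
  rw [Pi.add_apply, zpow_add₀ (Units.ne_zero _)]

lemma Pk_zero (p : Fin 2 → kˣ) : Pk p 0 = 1 := by simp [Pk]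

lemma Pk_neg (p : Fin 2 → kˣ) (u : Fin 2 → ℤ) : Pk p (-u) = (Pk p u)⁻¹ := by
  refine eq_inv_of_mul_eq_one_left ?_
  rw [← Pk_add]
  simp [Pk_zero]

lemma Pk_expand (p : Fin 2 → kˣ) (u : Fin 2 → ℤ) :
    Pk p u = (p 0 : k) ^ (u 0) * (p 1 : k) ^ (u 1) := by
  rw [Pk, Fin.prod_univ_two]

/-- Weighted evaluation as an additive hom. -/
noncomputable def Whom (φ : (Fin 2 → ℤ) → k) (p : Fin 2 → kˣ) :
    AddMonoidAlgebra k (Fin 2 → ℤ) →+ k where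
  toFun f := f.coeff.sum fun u a => φ u * a * Pk p u
  map_zero' := by rw [AddMonoidAlgebra.coeff_zero]; exact Finsupp.sum_zero_index
  map_add' f₁ f₂ := by
    simp only [AddMonoidAlgebra.coeff_add]
    exact Finsupp.sum_add_index' (fun u => by ring) fun u a b => by ring

lemma Whom_apply (φ : (Fin 2 → ℤ) → k) (p : Fin 2 → kˣ) (f : AddMonoidAlgebra k (Fin 2 → ℤ)) :
    Whom φ p f = ∑ u ∈ f.coeff.support, φ u * f.coeff u * Pk p u := by
  simp only [Whom, AddMonoidHom.coe_mk, ZeroHom.coe_mk]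
  rfl

lemma Whom_single (φ : (Fin 2 → ℤ) → k) (p : Fin 2 → kˣ) (u : Fin 2 → ℤ) (a : k) :
    Whom φ p (AddMonoidAlgebra.single u a) = φ u * a * Pk p u := by
  simp only [Whom, AddMonoidHom.coe_mk, ZeroHom.coe_mk]
  rw [AddMonoidAlgebra.coeff_single, Finsupp.sum_single_index (by ring)]

lemma Whom_mul (φ : (Fin 2 → ℤ) → k) (p : Fin 2 → kˣ)
    (g h : AddMonoidAlgebra k (Fin 2 → ℤ)) :
    Whom φ p (g * h) =
      ∑ u ∈ g.coeff.support, ∑ v ∈ h.coeff.support, φ (u + v) * (g.coeff u * h.coeff v) * (Pk p u * Pk p v) := by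
  rw [AddMonoidAlgebra.mul_def, Finsupp.sum, map_sum]
  refine Finset.sum_congr rfl fun u hu => ?_
  rw [Finsupp.sum, map_sum]
  refine Finset.sum_congr rfl fun v hv => ?_
  rw [Whom_single, Pk_add]

lemma evalT_eq_Whom (f : AddMonoidAlgebra k (Fin 2 → ℤ)) (p : Fin 2 → kˣ) :
    evalT f p = Whom (fun _ => (1 : k)) p f := by
  rw [evalT, Whom_apply, Finsupp.sum]
  exact Finset.sum_congr rfl fun u _ => by rw [Pk]; ring

lemma evalT_mul (g h : AddMonoidAlgebra k (Fin 2 → ℤ)) (p : Fin 2 → kˣ) :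
    evalT (g * h) p = evalT g p * evalT h p := by
  rw [evalT_eq_Whom, evalT_eq_Whom, evalT_eq_Whom, Whom_mul, Whom_apply, Whom_apply,
    Finset.sum_mul_sum]
  exact Finset.sum_congr rfl fun u _ => Finset.sum_congr rfl fun v _ => by ring

/-- Logarithmic derivative evaluation. -/
noncomputable def Dl (j : Fin 2) (f : AddMonoidAlgebra k (Fin 2 → ℤ)) (p : Fin 2 → kˣ) : k :=
  Whom (fun u => (u j : k)) p f

lemma Dl_mul (j : Fin 2) (g h : AddMonoidAlgebra k (Fin 2 → ℤ)) (p : Fin 2 → kˣ) :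
    Dl j (g * h) p = evalT g p * Dl j h p + Dl j g p * evalT h p := by
  rw [Dl, Whom_mul, evalT_eq_Whom, evalT_eq_Whom, Dl, Dl, Whom_apply, Whom_apply, Whom_apply,
    Whom_apply, Finset.sum_mul_sum, Finset.sum_mul_sum, ← Finset.sum_add_distrib]
  refine Finset.sum_congr rfl fun u _ => ?_
  rw [← Finset.sum_add_distrib]
  refine Finset.sum_congr rfl fun v _ => ?_
  have : ((u + v) j : k) = (u j : k) + (v j : k) := by
    rw [Pi.add_apply]; push_cast; ring
  rw [this]; ring

/-- Second logarithmic derivative evaluation. -/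
noncomputable def DD (j l : Fin 2) (f : AddMonoidAlgebra k (Fin 2 → ℤ)) (p : Fin 2 → kˣ) : k :=
  Whom (fun u => (u j : k) * (u l : k)) p f

lemma DD_mul (j l : Fin 2) (g h : AddMonoidAlgebra k (Fin 2 → ℤ)) (p : Fin 2 → kˣ) :
    DD j l (g * h) p = evalT g p * DD j l h p + DD j l g p * evalT h p
      + Dl j g p * Dl l h p + Dl l g p * Dl j h p := by
  rw [DD, Whom_mul, evalT_eq_Whom, evalT_eq_Whom, DD, DD, Dl, Dl, Dl, Dl, Whom_apply, Whom_apply,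
    Whom_apply, Whom_apply, Whom_apply, Whom_apply, Whom_apply, Whom_apply,
    Finset.sum_mul_sum, Finset.sum_mul_sum, Finset.sum_mul_sum, Finset.sum_mul_sum,
    ← Finset.sum_add_distrib, ← Finset.sum_add_distrib, ← Finset.sum_add_distrib]
  refine Finset.sum_congr rfl fun u _ => ?_
  rw [← Finset.sum_add_distrib, ← Finset.sum_add_distrib, ← Finset.sum_add_distrib]
  refine Finset.sum_congr rfl fun v _ => ?_
  have h1 : ((u + v) j : k) = (u j : k) + (v j : k) := by
    rw [Pi.add_apply]; push_cast; ring
  have h2 : ((u + v) l : k) = (u l : k) + (v l : k) := by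
    rw [Pi.add_apply]; push_cast; ring
  rw [h1, h2]; ring

lemma Dl_eq (j : Fin 2) (f : AddMonoidAlgebra k (Fin 2 → ℤ)) (p : Fin 2 → kˣ) :
    Dl j f p = (p j : k) * partialEval j f p := by
  rw [Dl, Whom_apply, partialEval, Finsupp.sum, Finset.mul_sum]
  refine Finset.sum_congr rfl fun u _ => ?_
  rw [Pk_expand, Fin.prod_univ_two]
  fin_cases j
  · show (u 0 : k) * f.coeff u * ((p 0 : k) ^ (u 0) * (p 1 : k) ^ (u 1)) =
      (p 0 : k) * ((u 0 : k) * f.coeff u *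
        ((p 0 : k) ^ (u 0 - if (0 : Fin 2) = 0 then 1 else 0) *
         (p 1 : k) ^ (u 1 - if (1 : Fin 2) = 0 then 1 else 0)))
    rw [if_pos rfl, if_neg (by decide), sub_zero, zpow_sub_one₀ (Units.ne_zero (p 0))]
    field_simp
  · show (u 1 : k) * f.coeff u * ((p 0 : k) ^ (u 0) * (p 1 : k) ^ (u 1)) =
      (p 1 : k) * ((u 1 : k) * f.coeff u *
        ((p 0 : k) ^ (u 0 - if (0 : Fin 2) = 1 then 1 else 0) *
         (p 1 : k) ^ (u 1 - if (1 : Fin 2) = 1 then 1 else 0)))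
    rw [if_neg (by decide), if_pos rfl, sub_zero, zpow_sub_one₀ (Units.ne_zero (p 1))]
    field_simp

lemma eq_of_coordsR {u v : Fin 2 → ℤ} (h0 : (u 0 : ℝ) = v 0) (h1 : (u 1 : ℝ) = v 1) :
    u = v := by
  have h0' : u 0 = v 0 := by exact_mod_cast h0
  have h1' : u 1 = v 1 := by exact_mod_cast h1
  funext i
  fin_cases i
  · exact h0'
  · exact h1'

lemma toR_inj {n : ℕ} {u v : Fin n → ℤ} (h : toR u = toR v) : u = v := by
  funext i
  have := congrFun h i
  simpa [toR] using this

lemma exists4 (S : Finset (Fin 2 → ℤ)) (h : S.card = 4) :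
    ∃ a b c d : Fin 2 → ℤ, a ≠ b ∧ a ≠ c ∧ a ≠ d ∧ b ≠ c ∧ b ≠ d ∧ c ≠ d ∧
      S = {a, b, c, d} := by
  classical
  rw [show (4 : ℕ) = 3 + 1 from rfl, Finset.card_eq_succ] at h
  obtain ⟨a, t, hat, rfl, ht⟩ := h
  rw [Finset.card_eq_three] at ht
  obtain ⟨b, c, d, hbc, hbd, hcd, rfl⟩ := ht
  refine ⟨a, b, c, d, ?_, ?_, ?_, hbc, hbd, hcd, rfl⟩ <;>
    · rintro rfl
      simp at hat

/-- No three distinct support points are collinear. -/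
lemma D3_ne_zero (S : Finset (Fin 2 → ℤ))
    (hq : ∀ u ∈ S, toR u ∈ Set.extremePoints ℝ
      (convexHull ℝ (toR '' (S : Set (Fin 2 → ℤ)))))
    (x y z : Fin 2 → ℤ) (hx : x ∈ S) (hy : y ∈ S) (hz : z ∈ S)
    (hxy : x ≠ y) (hxz : x ≠ z) (hyz : y ≠ z) :
    (y 0 - x 0) * (z 1 - x 1) - (y 1 - x 1) * (z 0 - x 0) ≠ 0 := by
  intro hD
  have hDR : ((y 0 : ℝ) - x 0) * ((z 1 : ℝ) - x 1) - ((y 1 : ℝ) - x 1) * ((z 0 : ℝ) - x 0) = 0 := by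
    exact_mod_cast congrArg (fun t : ℤ => (t : ℝ)) hD
  have hcol : Collinear ℝ ({toR x, toR y, toR z} : Set (Fin 2 → ℝ)) := by
    rw [collinear_iff_of_mem (Set.mem_insert (toR x) _)]
    by_cases h0 : (y 0 : ℝ) - x 0 = 0
    · have hy1 : (y 1 : ℝ) - x 1 ≠ 0 := by
        intro h1
        exact hxy (eq_of_coordsR (by linarith) (by linarith))
      have hz0 : (z 0 : ℝ) - x 0 = 0 := by
        rcases mul_eq_zero.1
            (show ((y 1 : ℝ) - x 1) * ((z 0 : ℝ) - x 0) = 0 by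
              linear_combination ((z 1 : ℝ) - x 1) * h0 - hDR) with h | h
        · exact absurd h hy1
        · exact h
      have hyx0 : y 0 = x 0 := by exact_mod_cast (show (y 0 : ℝ) = x 0 by linarith)
      have hzx0 : z 0 = x 0 := by exact_mod_cast (show (z 0 : ℝ) = x 0 by linarith)
      refine ⟨(fun i => if i = 0 then 0 else 1 : Fin 2 → ℝ), ?_⟩
      rintro p (rfl | rfl | rfl)
      · refine ⟨0, ?_⟩
        funext i
        fin_cases i <;> simp [toR]
      · refine ⟨(y 1 : ℝ) - x 1, ?_⟩
        funext i
        fin_cases i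
        · simp [toR, hyx0]
        · simp [toR]
      · refine ⟨(z 1 : ℝ) - x 1, ?_⟩
        funext i
        fin_cases i
        · simp [toR, hzx0]
        · simp [toR]
    · refine ⟨toR y - toR x, ?_⟩
      rintro p (rfl | rfl | rfl)
      · exact ⟨0, by funext i; fin_cases i <;> simp [toR]⟩
      · exact ⟨1, by funext i; fin_cases i <;> simp [toR]⟩
      · refine ⟨((z 0 : ℝ) - x 0) / ((y 0 : ℝ) - x 0), ?_⟩
        funext i
        fin_cases i
        · show (z 0 : ℝ) = _
          simp [toR]
          field_simp
          ring
        · show (z 1 : ℝ) = _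
          simp [toR]
          field_simp
          nlinarith [hDR]
  have himg : ∀ w : Fin 2 → ℤ, w ∈ S →
      toR w ∈ convexHull ℝ (toR '' (S : Set (Fin 2 → ℤ))) := fun w hw =>
    subset_convexHull ℝ _ (Set.mem_image_of_mem _ hw)
  have key : ∀ u v w : Fin 2 → ℤ, u ∈ S → v ∈ S → w ∈ S → u ≠ v → v ≠ w →
      Wbtw ℝ (toR u) (toR v) (toR w) → False := by
    intro u v w hu hv hw huv hvw hW
    have hs : Sbtw ℝ (toR u) (toR v) (toR w) :=
      ⟨hW, fun hh => huv (toR_inj hh.symm), fun hh => hvw (toR_inj hh)⟩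
    have hmem : toR v ∈ openSegment ℝ (toR u) (toR w) := by
      rw [openSegment_eq_image_lineMap]
      exact hs.mem_image_Ioo
    have hext := (hq v hv).2 (himg u hu) (himg w hw) hmem
    exact huv (toR_inj hext)
  rcases hcol.wbtw_or_wbtw_or_wbtw with hW | hW | hW
  · exact key x y z hx hy hz hxy hyz hW
  · exact key y z x hy hz hx hyz (Ne.symm hxz) hW
  · exact key z x y hz hx hy (Ne.symm hxz) hxy hW

lemma cramer3 (x0 x1 y0 y1 z0 z1 ub uc ud : k)
    (h1 : ub + uc + ud = 0) (h2 : x0 * ub + y0 * uc + z0 * ud = 0)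
    (h3 : x1 * ub + y1 * uc + z1 * ud = 0)
    (hD : (y0 - x0) * (z1 - x1) - (y1 - x1) * (z0 - x0) ≠ 0) :
    ub = 0 ∧ uc = 0 ∧ ud = 0 := by
  have hb : ((y0 - x0) * (z1 - x1) - (y1 - x1) * (z0 - x0)) * ub = 0 := by
    linear_combination (y0 * z1 - z0 * y1) * h1 + (y1 - z1) * h2 + (z0 - y0) * h3
  have hc : ((y0 - x0) * (z1 - x1) - (y1 - x1) * (z0 - x0)) * uc = 0 := by
    linear_combination (z0 * x1 - x0 * z1) * h1 + (z1 - x1) * h2 + (x0 - z0) * h3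
  have hd : ((y0 - x0) * (z1 - x1) - (y1 - x1) * (z0 - x0)) * ud = 0 := by
    linear_combination (x0 * y1 - y0 * x1) * h1 + (x1 - y1) * h2 + (y0 - x0) * h3
  exact ⟨by rcases mul_eq_zero.1 hb with h | h; exact absurd h hD; exact h,
    by rcases mul_eq_zero.1 hc with h | h; exact absurd h hD; exact h,
    by rcases mul_eq_zero.1 hd with h | h; exact absurd h hD; exact h⟩

lemma kernel_structure (A0 A1 B0 B1 C0 C1 D0 D1 La Lb Lc Ld va vb vc vd : k)
    (hdLa : La = (C0 - B0) * (D1 - B1) - (C1 - B1) * (D0 - B0))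
    (hdLb : Lb = -((C0 - A0) * (D1 - A1) - (C1 - A1) * (D0 - A0)))
    (hdLc : Lc = (B0 - A0) * (D1 - A1) - (B1 - A1) * (D0 - A0))
    (hdLd : Ld = -((B0 - A0) * (C1 - A1) - (B1 - A1) * (C0 - A0)))
    (hLa : La ≠ 0)
    (E0 : va + vb + vc + vd = 0)
    (E1 : A0 * va + B0 * vb + C0 * vc + D0 * vd = 0)
    (E2 : A1 * va + B1 * vb + C1 * vc + D1 * vd = 0) :
    La * vb = va * Lb ∧ La * vc = va * Lc ∧ La * vd = va * Ld := by
  obtain ⟨h1, h2, h3⟩ := cramer3 B0 B1 C0 C1 D0 D1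
    (La * vb - va * Lb) (La * vc - va * Lc) (La * vd - va * Ld)
    (by linear_combination La * E0 - va * hdLa - va * hdLb - va * hdLc - va * hdLd)
    (by linear_combination La * E1 - va * (A0 * hdLa + B0 * hdLb + C0 * hdLc + D0 * hdLd))
    (by linear_combination La * E2 - va * (A1 * hdLa + B1 * hdLb + C1 * hdLc + D1 * hdLd))
    (hdLa ▸ hLa)
  exact ⟨by linear_combination h1, by linear_combination h2, by linear_combination h3⟩

set_option maxHeartbeats 1000000 in
lemma det_step (A0 A1 B0 B1 C0 C1 D0 D1 La Lb Lc Ld va vb vc vd Dg0 Dg1 Dh0 Dh1 : k)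
    (hdLa : La = (C0 - B0) * (D1 - B1) - (C1 - B1) * (D0 - B0))
    (hdLb : Lb = -((C0 - A0) * (D1 - A1) - (C1 - A1) * (D0 - A0)))
    (hdLc : Lc = (B0 - A0) * (D1 - A1) - (B1 - A1) * (D0 - A0))
    (hdLd : Ld = -((B0 - A0) * (C1 - A1) - (B1 - A1) * (C0 - A0)))
    (hLa : La ≠ 0) (hLb : Lb ≠ 0) (hLc : Lc ≠ 0) (hLd : Ld ≠ 0) (hva : va ≠ 0)
    (hvb : La * vb = va * Lb) (hvc : La * vc = va * Lc) (hvd : La * vd = va * Ld)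
    (S00 : A0 * A0 * va + B0 * B0 * vb + C0 * C0 * vc + D0 * D0 * vd = Dg0 * Dh0 + Dg0 * Dh0)
    (S01 : A0 * A1 * va + B0 * B1 * vb + C0 * C1 * vc + D0 * D1 * vd = Dg0 * Dh1 + Dg1 * Dh0)
    (S11 : A1 * A1 * va + B1 * B1 * vb + C1 * C1 * vc + D1 * D1 * vd = Dg1 * Dh1 + Dg1 * Dh1) :
    Dg0 * Dh1 - Dg1 * Dh0 ≠ 0 := by
  have t00 : La * (Dg0 * Dh0 + Dg0 * Dh0) =
      va * (La * (A0 * A0) + Lb * (B0 * B0) + Lc * (C0 * C0) + Ld * (D0 * D0)) := by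
    linear_combination (-La) * S00 + (B0 * B0) * hvb + (C0 * C0) * hvc + (D0 * D0) * hvd
  have t01 : La * (Dg0 * Dh1 + Dg1 * Dh0) =
      va * (La * (A0 * A1) + Lb * (B0 * B1) + Lc * (C0 * C1) + Ld * (D0 * D1)) := by
    linear_combination (-La) * S01 + (B0 * B1) * hvb + (C0 * C1) * hvc + (D0 * D1) * hvd
  have t11 : La * (Dg1 * Dh1 + Dg1 * Dh1) =
      va * (La * (A1 * A1) + Lb * (B1 * B1) + Lc * (C1 * C1) + Ld * (D1 * D1)) := by
    linear_combination (-La) * S11 + (B1 * B1) * hvb + (C1 * C1) * hvc + (D1 * D1) * hvd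
  have k1 : La ^ 2 * (Dg0 * Dh1 + Dg1 * Dh0) ^ 2 =
      va ^ 2 * (La * (A0 * A1) + Lb * (B0 * B1) + Lc * (C0 * C1) + Ld * (D0 * D1)) ^ 2 := by
    linear_combination (La * (Dg0 * Dh1 + Dg1 * Dh0) +
      va * (La * (A0 * A1) + Lb * (B0 * B1) + Lc * (C0 * C1) + Ld * (D0 * D1))) * t01
  have k2 : La ^ 2 * ((Dg0 * Dh0 + Dg0 * Dh0) * (Dg1 * Dh1 + Dg1 * Dh1)) =
      va ^ 2 * ((La * (A0 * A0) + Lb * (B0 * B0) + Lc * (C0 * C0) + Ld * (D0 * D0)) *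
        (La * (A1 * A1) + Lb * (B1 * B1) + Lc * (C1 * C1) + Ld * (D1 * D1))) := by
    linear_combination
      (va * (La * (A1 * A1) + Lb * (B1 * B1) + Lc * (C1 * C1) + Ld * (D1 * D1))) * t00 +
      (La * (Dg0 * Dh0 + Dg0 * Dh0)) * t11
  have key : (La * (Dg0 * Dh1 - Dg1 * Dh0)) ^ 2 = va ^ 2 * (La * Lb * Lc * Ld) := by
    subst hdLa hdLb hdLc hdLd
    linear_combination k1 - k2
  intro hT
  rw [hT, mul_zero, zero_pow (by norm_num : 2 ≠ 0)] at key
  have : va ^ 2 * (La * Lb * Lc * Ld) ≠ 0 := by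
    apply mul_ne_zero (pow_ne_zero _ hva)
    exact mul_ne_zero (mul_ne_zero (mul_ne_zero hLa hLb) hLc) hLd
  exact this key.symm

end Machinery

/-- Let `f` be a Laurent polynomial in two variables over an algebraically closed field of
characteristic `0` whose support `A` has convex hull a quadrilateral (four points, all
extreme) with affine ℤ-span equal to `ℤ²`, and let `f = g h` be a nontrivial
factorization (neither factor a unit of the Laurent polynomial ring).  Then `V(g)` and
`V(h)` have intersection number at most `1` in `(k*)²`: they meet in at most one point,
and at any common zero they meet transversally (the gradients of `g` and `h` are linearly
independent there). -/
theorem statement19 {k : Type*} [Field k] [IsAlgClosed k] [CharZero k]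
    (f g h : AddMonoidAlgebra k (Fin 2 → ℤ))
    (hcard : f.coeff.support.card = 4)
    (hquad : ∀ u ∈ f.coeff.support, toR u ∈ Set.extremePoints ℝ
      (convexHull ℝ (toR '' (↑f.coeff.support : Set (Fin 2 → ℤ)))))
    (hspan : affineSpan ℤ (↑f.coeff.support : Set (Fin 2 → ℤ)) = ⊤)
    (hfac : f = g * h)
    (hg : ¬ IsUnit g) (hh : ¬ IsUnit h) :
    (∀ p q : Fin 2 → kˣ,
        evalT g p = 0 ∧ evalT h p = 0 → evalT g q = 0 ∧ evalT h q = 0 → p = q) ∧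
    (∀ p : Fin 2 → kˣ, evalT g p = 0 ∧ evalT h p = 0 →
      partialEval 0 g p * partialEval 1 h p - partialEval 1 g p * partialEval 0 h p ≠ 0) := by
  classical
  obtain ⟨a, b, c, d, hab, hac, had, hbc, hbd, hcd, hS⟩ := exists4 f.coeff.support hcard
  have ha : a ∈ f.coeff.support := by rw [hS]; simp
  have hb : b ∈ f.coeff.support := by rw [hS]; simp
  have hc : c ∈ f.coeff.support := by rw [hS]; simp
  have hd : d ∈ f.coeff.support := by rw [hS]; simp
  have hfa : f.coeff a ≠ 0 := Finsupp.mem_support_iff.1 ha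
  have hfb : f.coeff b ≠ 0 := Finsupp.mem_support_iff.1 hb
  have hfc : f.coeff c ≠ 0 := Finsupp.mem_support_iff.1 hc
  have hfd : f.coeff d ≠ 0 := Finsupp.mem_support_iff.1 hd
  have hsum : ∀ F : (Fin 2 → ℤ) → k, (∑ u ∈ f.coeff.support, F u) = F a + F b + F c + F d := by
    intro F
    rw [hS, show ({a, b, c, d} : Finset (Fin 2 → ℤ)) = insert a (insert b (insert c {d}))
        from rfl,
      Finset.sum_insert (by simp [hab, hac, had]),
      Finset.sum_insert (by simp [hbc, hbd]),
      Finset.sum_insert (by simp [hcd]), Finset.sum_singleton]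
    ring
  have hDa : ((c 0 - b 0) * (d 1 - b 1) - (c 1 - b 1) * (d 0 - b 0) : ℤ) ≠ 0 :=
    D3_ne_zero f.coeff.support hquad b c d hb hc hd hbc hbd hcd
  have hDb : ((c 0 - a 0) * (d 1 - a 1) - (c 1 - a 1) * (d 0 - a 0) : ℤ) ≠ 0 :=
    D3_ne_zero f.coeff.support hquad a c d ha hc hd hac had hcd
  have hDc : ((b 0 - a 0) * (d 1 - a 1) - (b 1 - a 1) * (d 0 - a 0) : ℤ) ≠ 0 :=
    D3_ne_zero f.coeff.support hquad a b d ha hb hd hab had hbd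
  have hDd : ((b 0 - a 0) * (c 1 - a 1) - (b 1 - a 1) * (c 0 - a 0) : ℤ) ≠ 0 :=
    D3_ne_zero f.coeff.support hquad a b c ha hb hc hab hac hbc
  set La : k := (((c 0 - b 0) * (d 1 - b 1) - (c 1 - b 1) * (d 0 - b 0) : ℤ) : k) with hLadef
  set Lb : k := -(((c 0 - a 0) * (d 1 - a 1) - (c 1 - a 1) * (d 0 - a 0) : ℤ) : k) with hLbdef
  set Lc : k := (((b 0 - a 0) * (d 1 - a 1) - (b 1 - a 1) * (d 0 - a 0) : ℤ) : k) with hLcdef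
  set Ld : k := -(((b 0 - a 0) * (c 1 - a 1) - (b 1 - a 1) * (c 0 - a 0) : ℤ) : k) with hLddef
  have hLa : La ≠ 0 := by rw [hLadef]; exact Int.cast_ne_zero.mpr hDa
  have hLb : Lb ≠ 0 := by rw [hLbdef]; exact neg_ne_zero.mpr (Int.cast_ne_zero.mpr hDb)
  have hLc : Lc ≠ 0 := by rw [hLcdef]; exact Int.cast_ne_zero.mpr hDc
  have hLd : Ld ≠ 0 := by rw [hLddef]; exact neg_ne_zero.mpr (Int.cast_ne_zero.mpr hDd)
  have hdLa : La = ((c 0 : k) - (b 0 : k)) * ((d 1 : k) - (b 1 : k))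
      - ((c 1 : k) - (b 1 : k)) * ((d 0 : k) - (b 0 : k)) := by
    rw [hLadef]; push_cast; ring
  have hdLb : Lb = -(((c 0 : k) - (a 0 : k)) * ((d 1 : k) - (a 1 : k))
      - ((c 1 : k) - (a 1 : k)) * ((d 0 : k) - (a 0 : k))) := by
    rw [hLbdef]; push_cast; ring
  have hdLc : Lc = ((b 0 : k) - (a 0 : k)) * ((d 1 : k) - (a 1 : k))
      - ((b 1 : k) - (a 1 : k)) * ((d 0 : k) - (a 0 : k)) := by
    rw [hLcdef]; push_cast; ring
  have hdLd : Ld = -(((b 0 : k) - (a 0 : k)) * ((c 1 : k) - (a 1 : k))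
      - ((b 1 : k) - (a 1 : k)) * ((c 0 : k) - (a 0 : k))) := by
    rw [hLddef]; push_cast; ring
  have analyze : ∀ pp : Fin 2 → kˣ, evalT g pp = 0 → evalT h pp = 0 →
      (La * (f.coeff b * Pk pp b) = (f.coeff a * Pk pp a) * Lb) ∧
      (La * (f.coeff c * Pk pp c) = (f.coeff a * Pk pp a) * Lc) ∧
      (La * (f.coeff d * Pk pp d) = (f.coeff a * Pk pp a) * Ld) ∧
      Dl 0 g pp * Dl 1 h pp - Dl 1 g pp * Dl 0 h pp ≠ 0 := by
    intro pp hg0 hh0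
    have hf0 : evalT f pp = 0 := by rw [hfac, evalT_mul, hg0, zero_mul]
    have hE0 : f.coeff a * Pk pp a + f.coeff b * Pk pp b + f.coeff c * Pk pp c + f.coeff d * Pk pp d = 0 := by
      rw [evalT_eq_Whom, Whom_apply, hsum] at hf0
      linear_combination hf0
    have hDl0 : Dl 0 f pp = 0 := by rw [hfac, Dl_mul 0 g h pp, hg0, hh0]; ring
    have hDl1 : Dl 1 f pp = 0 := by rw [hfac, Dl_mul 1 g h pp, hg0, hh0]; ring
    have hE1 : (a 0 : k) * (f.coeff a * Pk pp a) + (b 0 : k) * (f.coeff b * Pk pp b)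
        + (c 0 : k) * (f.coeff c * Pk pp c) + (d 0 : k) * (f.coeff d * Pk pp d) = 0 := by
      rw [Dl, Whom_apply, hsum] at hDl0
      linear_combination hDl0
    have hE2 : (a 1 : k) * (f.coeff a * Pk pp a) + (b 1 : k) * (f.coeff b * Pk pp b)
        + (c 1 : k) * (f.coeff c * Pk pp c) + (d 1 : k) * (f.coeff d * Pk pp d) = 0 := by
      rw [Dl, Whom_apply, hsum] at hDl1
      linear_combination hDl1
    have hva : f.coeff a * Pk pp a ≠ 0 := mul_ne_zero hfa (Pk_ne_zero pp a)
    obtain ⟨r1, r2, r3⟩ := kernel_structure (a 0 : k) (a 1 : k) (b 0 : k) (b 1 : k)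
      (c 0 : k) (c 1 : k) (d 0 : k) (d 1 : k) La Lb Lc Ld
      (f.coeff a * Pk pp a) (f.coeff b * Pk pp b) (f.coeff c * Pk pp c) (f.coeff d * Pk pp d)
      hdLa hdLb hdLc hdLd hLa hE0 hE1 hE2
    refine ⟨r1, r2, r3, ?_⟩
    have hS00 : (a 0 : k) * (a 0 : k) * (f.coeff a * Pk pp a) + (b 0 : k) * (b 0 : k) * (f.coeff b * Pk pp b)
        + (c 0 : k) * (c 0 : k) * (f.coeff c * Pk pp c) + (d 0 : k) * (d 0 : k) * (f.coeff d * Pk pp d)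
        = Dl 0 g pp * Dl 0 h pp + Dl 0 g pp * Dl 0 h pp := by
      have hDD : DD 0 0 f pp = Dl 0 g pp * Dl 0 h pp + Dl 0 g pp * Dl 0 h pp := by
        rw [hfac, DD_mul 0 0 g h pp, hg0, hh0]; ring
      rw [DD, Whom_apply, hsum] at hDD
      linear_combination hDD
    have hS01 : (a 0 : k) * (a 1 : k) * (f.coeff a * Pk pp a) + (b 0 : k) * (b 1 : k) * (f.coeff b * Pk pp b)
        + (c 0 : k) * (c 1 : k) * (f.coeff c * Pk pp c) + (d 0 : k) * (d 1 : k) * (f.coeff d * Pk pp d)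
        = Dl 0 g pp * Dl 1 h pp + Dl 1 g pp * Dl 0 h pp := by
      have hDD : DD 0 1 f pp = Dl 0 g pp * Dl 1 h pp + Dl 1 g pp * Dl 0 h pp := by
        rw [hfac, DD_mul 0 1 g h pp, hg0, hh0]; ring
      rw [DD, Whom_apply, hsum] at hDD
      linear_combination hDD
    have hS11 : (a 1 : k) * (a 1 : k) * (f.coeff a * Pk pp a) + (b 1 : k) * (b 1 : k) * (f.coeff b * Pk pp b)
        + (c 1 : k) * (c 1 : k) * (f.coeff c * Pk pp c) + (d 1 : k) * (d 1 : k) * (f.coeff d * Pk pp d)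
        = Dl 1 g pp * Dl 1 h pp + Dl 1 g pp * Dl 1 h pp := by
      have hDD : DD 1 1 f pp = Dl 1 g pp * Dl 1 h pp + Dl 1 g pp * Dl 1 h pp := by
        rw [hfac, DD_mul 1 1 g h pp, hg0, hh0]; ring
      rw [DD, Whom_apply, hsum] at hDD
      linear_combination hDD
    exact det_step (a 0 : k) (a 1 : k) (b 0 : k) (b 1 : k) (c 0 : k) (c 1 : k) (d 0 : k)
      (d 1 : k) La Lb Lc Ld (f.coeff a * Pk pp a) (f.coeff b * Pk pp b) (f.coeff c * Pk pp c) (f.coeff d * Pk pp d)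
      (Dl 0 g pp) (Dl 1 g pp) (Dl 0 h pp) (Dl 1 h pp)
      hdLa hdLb hdLc hdLd hLa hLb hLc hLd hva r1 r2 r3 hS00 hS01 hS11
  constructor
  · -- uniqueness of the common zero
    intro p q hp hq
    obtain ⟨rpb, rpc, rpd, -⟩ := analyze p hp.1 hp.2
    obtain ⟨rqb, rqc, rqd, -⟩ := analyze q hq.1 hq.2
    have key : ∀ x ∈ f.coeff.support, Pk p x * Pk q a = Pk p a * Pk q x := by
      intro x hx
      have hx4 : x = a ∨ x = b ∨ x = c ∨ x = d := by
        rw [hS] at hx; simpa using hx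
      have step : ∀ (y : Fin 2 → ℤ) (Ly : k),
          La * (f.coeff y * Pk p y) = (f.coeff a * Pk p a) * Ly →
          La * (f.coeff y * Pk q y) = (f.coeff a * Pk q a) * Ly →
          f.coeff y ≠ 0 → Pk p y * Pk q a = Pk p a * Pk q y := by
        intro y Ly hpy hqy hfy
        have h1 : La * ((f.coeff y * Pk p y) * (f.coeff a * Pk q a)) =
            La * ((f.coeff a * Pk p a) * (f.coeff y * Pk q y)) := by
          linear_combination (f.coeff a * Pk q a) * hpy - (f.coeff a * Pk p a) * hqy
        have h2 := mul_left_cancel₀ hLa h1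
        have h3 : (f.coeff a * f.coeff y) * (Pk p y * Pk q a) = (f.coeff a * f.coeff y) * (Pk p a * Pk q y) := by
          linear_combination h2
        exact mul_left_cancel₀ (mul_ne_zero hfa hfy) h3
      rcases hx4 with h4 | h4 | h4 | h4
      · rw [h4]
      · rw [h4]; exact step b Lb rpb rqb hfb
      · rw [h4]; exact step c Lc rpc rqc hfc
      · rw [h4]; exact step d Ld rpd rqd hfd
    let M : AddSubgroup (Fin 2 → ℤ) :=
      { carrier := {e | Pk p e = Pk q e}
        zero_mem' := by simp [Pk_zero]
        add_mem' := by
          intro e1 e2 h1 h2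
          simp only [Set.mem_setOf_eq] at *
          rw [Pk_add, Pk_add, h1, h2]
        neg_mem' := by
          intro e he
          simp only [Set.mem_setOf_eq] at *
          rw [Pk_neg, Pk_neg, he] }
    have hMtop : ∀ e : Fin 2 → ℤ, e ∈ M := by
      have hvs : vectorSpan ℤ (↑f.coeff.support : Set (Fin 2 → ℤ)) = ⊤ :=
        AffineSubspace.vectorSpan_eq_top_of_affineSpan_eq_top ℤ (Fin 2 → ℤ) (Fin 2 → ℤ) hspan
      have hle : Submodule.span ℤ ((↑f.coeff.support : Set (Fin 2 → ℤ)) -ᵥ ↑f.coeff.support)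
          ≤ AddSubgroup.toIntSubmodule M := by
        rw [Submodule.span_le]
        rintro e he
        rw [Set.mem_vsub] at he
        obtain ⟨x, hx, y, hy, rfl⟩ := he
        show Pk p (x -ᵥ y) = Pk q (x -ᵥ y)
        have hex := key x hx
        have hey := key y hy
        have hxy' : Pk p x * Pk q y = Pk p y * Pk q x := by
          have h5 : (Pk p x * Pk q y) * (Pk p a * Pk q a)
              = (Pk p y * Pk q x) * (Pk p a * Pk q a) := by
            linear_combination (Pk p a * Pk q y) * hex - (Pk p a * Pk q x) * hey
          exact mul_right_cancel₀ (mul_ne_zero (Pk_ne_zero p a) (Pk_ne_zero q a)) h5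
        have hv : x -ᵥ y = x + (-y) := by rw [vsub_eq_sub, sub_eq_add_neg]
        rw [hv, Pk_add, Pk_add, Pk_neg, Pk_neg, ← div_eq_mul_inv, ← div_eq_mul_inv,
          div_eq_div_iff (Pk_ne_zero p y) (Pk_ne_zero q y)]
        linear_combination hxy'
      intro e
      have he : e ∈ AddSubgroup.toIntSubmodule M := by
        apply hle
        rw [← vectorSpan_def, hvs]
        exact Submodule.mem_top
      exact he
    have h0 : (p 0 : k) = (q 0 : k) := by
      have hm := hMtop (fun i => if i = 0 then 1 else 0)
      have := (show Pk p (fun i => if i = 0 then 1 else 0) = Pk q (fun i => if i = 0 then 1 else 0) from hm)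
      rw [Pk_expand, Pk_expand] at this
      norm_num at this
      exact this
    have h1 : (p 1 : k) = (q 1 : k) := by
      have hm := hMtop (fun i => if i = 0 then 0 else 1)
      have := (show Pk p (fun i => if i = 0 then 0 else 1) = Pk q (fun i => if i = 0 then 0 else 1) from hm)
      rw [Pk_expand, Pk_expand] at this
      norm_num at this
      exact this
    funext i
    fin_cases i
    · exact Units.ext h0
    · exact Units.ext h1
  · -- transversality
    intro p hp
    have hT := (analyze p hp.1 hp.2).2.2.2
    simp only [Dl_eq] at hT
    intro h0
    apply hT
    linear_combination ((p 0 : k) * (p 1 : k)) * h0
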